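/- arXiv:1707.08882 — 4 statements merged into one kernel-verified Lean document; each statement's English description precedes it below -/
import Mathlib

section
/- For every integer n ≥ 0, the integer (n+1)·T_{2n+1} is divisible by 2^{2n}, where T_{2n+1} is the (2n+1)-st tangent number. -/
/-!
Since `tan' = 1 + tan²`, Leibniz's rule gives `T (n + 1) = ∑ k ≤ n, C(n, k) T k T (n - k)` for
`n ≥ 1`; hence the `T n` are integers, and they vanish for even `n` because `tan` is odd.
For `b n = (n + 1) T (2n + 1)` the identity
`(2n + 3)(n + 2) C(2n + 2, 2i + 1) = 2 (i + 1)(n - i + 1) C(2n + 4, 2i + 2)` turns the recurrence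
into `(2n + 3) b (n + 1) = 2 ∑ i ≤ n, C(2n + 4, 2i + 2) b i b (n - i)`. By induction every summand
is divisible by `2^(2i) 2^(2(n - i)) = 4^n`; the quotients are symmetric under `i ↦ n - i` and the
middle one contains the even central binomial coefficient `C(4i + 4, 2i + 2)`, so their sum is
even. As `2n + 3` is odd, `4^(n + 1) ∣ b (n + 1)`.
-/

open Finset Filter Topology

/-- The tangent numbers: `tangent n` is the `n`-th derivative of `tan` at `0`,
so that `tan x = ∑ n, tangent n * x ^ n / n !`. -/
noncomputable def tangent (n : ℕ) : ℝ := iteratedDeriv n Real.tan 0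


theorem tangent_two_mul (m : ℕ) : tangent (2 * m) = 0 := by
  have h := iteratedDeriv_comp_neg (2 * m) Real.tan 0
  simp only [Real.tan_neg, iteratedDeriv_fun_neg, pow_mul, neg_one_sq, one_pow, one_smul,
    neg_zero] at h
  unfold tangent
  linarith

theorem tangent_succ (n : ℕ) :
    tangent (n + 1) = (if n = 0 then 1 else 0) +
      ∑ k ∈ range (n + 1), (n.choose k : ℝ) * tangent k * tangent (n - k) := by
  have hcos : ∀ᶠ x in 𝓝 (0 : ℝ), Real.cos x ≠ 0 :=
    Real.continuous_cos.continuousAt.eventually_ne (by simp)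
  have hderiv : deriv Real.tan =ᶠ[𝓝 0] fun x ↦ 1 + Real.tan x * Real.tan x := by
    filter_upwards [hcos] with x hx
    rw [Real.deriv_tan, Real.tan_eq_sin_div_cos]
    field_simp
    linarith [Real.sin_sq_add_cos_sq x]
  have htan : ContDiffAt ℝ n Real.tan 0 := Real.contDiffAt_tan.2 (by simp)
  rw [tangent, iteratedDeriv_succ', hderiv.iteratedDeriv_eq,
    iteratedDeriv_fun_add contDiffAt_const (htan.mul htan), iteratedDeriv_const,
    iteratedDeriv_fun_mul htan htan]
  rfl

theorem exists_intCast_eq_tangent (n : ℕ) : ∃ z : ℤ, tangent n = z := by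
  induction n using Nat.strong_induction_on with
  | _ n ih =>
  rcases n with _ | n
  · exact ⟨0, by simp [tangent]⟩
  choose! T hT using ih
  refine ⟨(if n = 0 then 1 else 0) + ∑ k ∈ range (n + 1), n.choose k * T k * T (n - k), ?_⟩
  rw [tangent_succ]
  push_cast
  refine congrArg _ (sum_congr rfl fun k hk ↦ ?_)
  rw [hT k (by simp at hk; omega), hT (n - k) (by omega)]

theorem Nat.add_two_choose_add_one_mul (N k : ℕ) :
    (N + 2).choose (k + 1) * (k + 1) * (N + 1 - k) = (N + 2) * (N + 1) * N.choose k := by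
  rw [← Nat.add_one_mul_choose_eq, mul_assoc, ← Nat.choose_mul_succ_eq]
  ring

theorem Finset.sum_range_two_mul_add_one_of_even {M : Type*} [AddCommMonoid M] (f : ℕ → M)
    (hf : ∀ i, f (2 * i) = 0) (n : ℕ) :
    ∑ k ∈ range (2 * n + 1), f k = ∑ i ∈ range n, f (2 * i + 1) := by
  induction n with
  | zero => simpa using hf 0
  | succ n ih =>
    rw [show 2 * (n + 1) + 1 = 2 * n + 1 + 1 + 1 by ring, sum_range_succ, sum_range_succ, ih,
      sum_range_succ, show 2 * n + 1 + 1 = 2 * (n + 1) by ring, hf, add_zero]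

theorem Finset.two_dvd_sum_range_of_reflect {f : ℕ → ℤ} (n : ℕ)
    (hsymm : ∀ i ≤ n, f (n - i) = f i) (hmid : ∀ i, i + i = n → 2 ∣ f i) :
    2 ∣ ∑ i ∈ range (n + 1), f i := by
  suffices h : ((∑ i ∈ range (n + 1), f i : ℤ) : ZMod 2) = 0 by
    exact_mod_cast (ZMod.intCast_zmod_eq_zero_iff_dvd _ 2).1 h
  rw [Int.cast_sum]
  refine sum_involution (fun i _ ↦ n - i) (fun i hi ↦ ?_) (fun i hi hne hfix ↦ ?_)
    (fun i hi ↦ by simp) (fun i hi ↦ by simp at hi; omega)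
  · rw [hsymm i (by simp at hi; omega)]
    exact CharTwo.add_self_eq_zero _
  · exact hne ((ZMod.intCast_zmod_eq_zero_iff_dvd _ 2).2 (hmid i (by simp at hi; omega)))

theorem two_pow_dvd_of_odd_convolution {b : ℕ → ℤ}
    (hrec : ∀ n : ℕ, (2 * n + 3 : ℤ) * b (n + 1) =
      2 * ∑ i ∈ range (n + 1), ((2 * n + 4).choose (2 * i + 2) : ℤ) * (b i * b (n - i)))
    (n : ℕ) : 2 ^ (2 * n) ∣ b n := by
  induction n using Nat.strong_induction_on with
  | _ n ih =>
  rcases n with _ | n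
  · simp
  have hb : ∀ i ≤ n, b i = 2 ^ (2 * i) * (b i / 2 ^ (2 * i)) := fun i hi ↦
    (Int.mul_ediv_cancel' (ih i (by omega))).symm
  set c : ℕ → ℤ := fun i ↦ ((2 * n + 4).choose (2 * i + 2) : ℤ) *
    (b i / 2 ^ (2 * i) * (b (n - i) / 2 ^ (2 * (n - i))))
  have hsum : ∑ i ∈ range (n + 1), ((2 * n + 4).choose (2 * i + 2) : ℤ) * (b i * b (n - i)) =
      2 ^ (2 * n) * ∑ i ∈ range (n + 1), c i := by
    rw [mul_sum]
    refine sum_congr rfl fun i hi ↦ ?_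
    rw [mem_range_succ_iff] at hi
    have hpow : (2 : ℤ) ^ (2 * n) = 2 ^ (2 * i) * 2 ^ (2 * (n - i)) := by
      rw [← pow_add]; congr 1; omega
    rw [hb i hi, hb (n - i) (by omega), hpow]
    simp only [c]
    ring
  have hc : 2 ∣ ∑ i ∈ range (n + 1), c i := by
    refine two_dvd_sum_range_of_reflect n (fun i hi ↦ ?_) (fun i hi ↦ ?_)
    · simp only [c]
      rw [Nat.sub_sub_self hi, ← Nat.choose_symm (by omega), show 2 * n + 4 - (2 * (n - i) + 2)
        = 2 * i + 2 by omega]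
      ring
    · have : 2 ∣ (2 * n + 4).choose (2 * i + 2) := by
        rw [show 2 * n + 4 = 2 * (2 * i + 2) by omega, ← Nat.centralBinom_eq_two_mul_choose]
        exact Nat.two_dvd_centralBinom_succ _
      exact Dvd.dvd.mul_right (by exact_mod_cast this) _
  have hcop : IsCoprime ((2 : ℤ) ^ (2 * (n + 1))) (2 * n + 3) :=
    IsCoprime.pow_left ⟨-(n + 1), 1, by ring⟩
  obtain ⟨d, hd⟩ := hc
  refine hcop.dvd_of_dvd_mul_left ⟨d, ?_⟩
  rw [hrec, hsum, hd]
  ring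

theorem odd_rec_of_tangent_rec {a : ℕ → ℤ} (heven : ∀ m, a (2 * m) = 0)
    (hrec : ∀ n, a (n + 2) = ∑ k ∈ range (n + 2), ((n + 1).choose k : ℤ) * a k * a (n + 1 - k))
    (n : ℕ) :
    a (2 * n + 3) = ∑ i ∈ range (n + 1),
      ((2 * n + 2).choose (2 * i + 1) : ℤ) * a (2 * i + 1) * a (2 * (n - i) + 1) := by
  rw [hrec (2 * n + 1), show 2 * n + 1 + 2 = 2 * (n + 1) + 1 by ring,
    sum_range_two_mul_add_one_of_even _ (fun i ↦ by simp [heven]) (n + 1)]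
  refine sum_congr rfl fun i hi ↦ ?_
  rw [show 2 * n + 1 + 1 - (2 * i + 1) = 2 * (n - i) + 1 by simp at hi; omega]

theorem two_pow_dvd_of_tangent_rec {a : ℕ → ℤ} (heven : ∀ m, a (2 * m) = 0)
    (hrec : ∀ n, a (n + 2) = ∑ k ∈ range (n + 2), ((n + 1).choose k : ℤ) * a k * a (n + 1 - k))
    (n : ℕ) : 2 ^ (2 * n) ∣ ((n : ℤ) + 1) * a (2 * n + 1) := by
  refine two_pow_dvd_of_odd_convolution (b := fun i ↦ ((i : ℤ) + 1) * a (2 * i + 1))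
    (fun m ↦ ?_) n
  rw [show 2 * (m + 1) + 1 = 2 * m + 3 by ring, odd_rec_of_tangent_rec heven hrec, mul_sum,
    mul_sum, mul_sum]
  refine sum_congr rfl fun i hi ↦ ?_
  rw [mem_range_succ_iff] at hi
  have key := Nat.add_two_choose_add_one_mul (2 * m + 2) (2 * i + 1)
  rw [show 2 * m + 2 + 2 = 2 * m + 4 by ring, show 2 * i + 1 + 1 = 2 * i + 2 by ring,
    show 2 * m + 2 + 1 - (2 * i + 1) = 2 * (m - i) + 2 by omega] at key
  have hchoose : ((2 * m + 3 : ℕ) : ℤ) * (m + 2) * ((2 * m + 2).choose (2 * i + 1) : ℤ) =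
      2 * ((2 * m + 4).choose (2 * i + 2) : ℤ) * (i + 1) * ((m - i : ℕ) + 1) := by
    have hkey := congrArg (Nat.cast : ℕ → ℤ) key
    push_cast at hkey ⊢
    refine mul_left_cancel₀ (two_ne_zero : (2 : ℤ) ≠ 0) ?_
    linear_combination -hkey
  push_cast at hchoose ⊢
  linear_combination a (2 * i + 1) * a (2 * (m - i) + 1) * hchoose

/-- For every integer `n ≥ 0`, the integer `(n+1) * T (2n+1)` is divisible by `2 ^ (2n)`. -/
theorem tangent_div_pow_two (n : ℕ) :
    ∃ m : ℤ, ((n : ℝ) + 1) * tangent (2 * n + 1) = (2 : ℝ) ^ (2 * n) * (m : ℝ) := by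
  choose T hT using exists_intCast_eq_tangent
  have heven (m : ℕ) : T (2 * m) = 0 := by
    exact_mod_cast (hT (2 * m)).symm.trans (tangent_two_mul m)
  have hrec (l : ℕ) :
      T (l + 2) = ∑ k ∈ range (l + 2), ((l + 1).choose k : ℤ) * T k * T (l + 1 - k) := by
    have h := tangent_succ (l + 1)
    simp only [hT, if_neg l.succ_ne_zero, zero_add] at h
    exact_mod_cast h
  obtain ⟨m, hm⟩ := two_pow_dvd_of_tangent_rec heven hrec n
  exact ⟨m, by rw [hT]; exact_mod_cast hm⟩
end

section
/- Let p ≥ 3 be a prime number and t ≥ 1 an integer. For every integer i ≥ 0, the binomial coefficient C(i·p^t + p^t − 1, p^t − 1) ≡ 1 (mod p²). -/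
open Finset Nat

lemma prod_Icc_add (a n : ℕ) :
    ∏ m ∈ Icc 1 n, (a + m) = (a + 1).ascFactorial n := by
  induction n with
  | zero => simp
  | succ n ih =>
      rw [Finset.prod_Icc_succ_top (Nat.succ_le_succ (Nat.zero_le n)), ih,
        Nat.ascFactorial_succ]
      ring

lemma prod_Icc_id_fac (n : ℕ) : ∏ m ∈ Icc 1 n, m = n ! := by
  have := prod_Icc_add 0 n
  simpa [Nat.one_ascFactorial] using this

lemma keyA (j q : ℕ) (hq : 1 ≤ q) :
    (j * q + q - 1).choose (q - 1) * (q - 1)! = ∏ m ∈ Icc 1 (q - 1), (j * q + m) := by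
  rw [prod_Icc_add, Nat.ascFactorial_eq_factorial_mul_choose]
  have : j * q + (q - 1) = j * q + q - 1 := by omega
  rw [this, Nat.mul_comm]

lemma prod_add_nilsq {R : Type*} [CommRing R] (x : R) (hx : x * x = 0)
    (s : Finset ℕ) (f : ℕ → R) :
    ∏ m ∈ s, (f m + x) = ∏ m ∈ s, f m + x * ∑ m ∈ s, ∏ k ∈ s.erase m, f k := by
  induction s using Finset.induction_on with
  | empty => simp
  | @insert a s ha ih =>
      rw [Finset.prod_insert ha, Finset.prod_insert ha, Finset.sum_insert ha,
        Finset.erase_insert ha, ih]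
      have h1 : ∑ m ∈ s, ∏ k ∈ (insert a s).erase m, f k
          = ∑ m ∈ s, f a * ∏ k ∈ s.erase m, f k := by
        refine Finset.sum_congr rfl fun m hm => ?_
        have hne : a ≠ m := by rintro rfl; exact ha hm
        rw [Finset.erase_insert_of_ne hne,
          Finset.prod_insert (fun h => ha (Finset.mem_of_mem_erase h))]
      rw [h1, ← Finset.mul_sum]
      linear_combination (∑ m ∈ s, ∏ k ∈ s.erase m, f k) * hx

lemma sum_inv_univ (p : ℕ) [NeZero p] (hp : p.Prime) (hp3 : 3 ≤ p) :
    ∑ x : ZMod p, x⁻¹ = 0 := by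
  haveI : Fact p.Prime := ⟨hp⟩
  have h1 : ∑ x : ZMod p, x⁻¹ = ∑ x : ZMod p, x := by
    apply Finset.sum_nbij' (fun x => x⁻¹) (fun x => x⁻¹) <;> simp
  rw [h1]
  have h2 : ∑ x : ZMod p, x = ∑ x : ZMod p, -x := by
    apply Finset.sum_nbij' (fun x => -x) (fun x => -x) <;> simp
  have h3 : (2 : ZMod p) * ∑ x : ZMod p, x = 0 := by
    rw [Finset.sum_neg_distrib] at h2
    linear_combination h2
  have h2ne : (2 : ZMod p) ≠ 0 := by
    have hnd : ¬ (p ∣ 2) := by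
      intro h; have := Nat.le_of_dvd (by norm_num) h; omega
    have : ((2 : ℕ) : ZMod p) ≠ 0 := by
      rw [Ne, ZMod.natCast_eq_zero_iff]; exact hnd
    simpa using this
  exact (mul_eq_zero.mp h3).resolve_left h2ne

lemma sum_inv_Icc (p : ℕ) (hp : p.Prime) (hp3 : 3 ≤ p) :
    ∑ m ∈ Icc 1 (p - 1), ((m : ZMod p))⁻¹ = 0 := by
  haveI : Fact p.Prime := ⟨hp⟩
  haveI : NeZero p := ⟨by omega⟩
  have hins : (Finset.range p) = insert 0 (Icc 1 (p - 1)) := by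
    ext m; simp only [Finset.mem_range, Finset.mem_insert, mem_Icc]; omega
  have h0 : ∑ m ∈ Finset.range p, ((m : ZMod p))⁻¹
      = ∑ m ∈ Icc 1 (p - 1), ((m : ZMod p))⁻¹ := by
    rw [hins, Finset.sum_insert (by simp)]
    simp
  rw [← h0]
  have h1 : ∑ m ∈ Finset.range p, ((m : ZMod p))⁻¹ = ∑ x : ZMod p, x⁻¹ := by
    refine Finset.sum_nbij' (fun m => (m : ZMod p)) (fun x => x.val) ?_ ?_ ?_ ?_ ?_
    · intro a _; exact Finset.mem_univ _
    · intro x _; exact Finset.mem_range.mpr (ZMod.val_lt x)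
    · intro a ha; exact ZMod.val_cast_of_lt (Finset.mem_range.mp ha)
    · intro x _; exact ZMod.natCast_rightInverse x
    · intro a _; rfl
  rw [h1, sum_inv_univ p hp hp3]

lemma harmonic_dvd (p : ℕ) (hp : p.Prime) (hp3 : 3 ≤ p) :
    p ∣ ∑ m ∈ Icc 1 (p - 1), ∏ k ∈ (Icc 1 (p - 1)).erase m, k := by
  haveI : Fact p.Prime := ⟨hp⟩
  rw [← ZMod.natCast_eq_zero_iff]
  push_cast
  have hne : ∀ m ∈ Icc 1 (p - 1), ((m : ZMod p)) ≠ 0 := by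
    intro m hm
    simp only [mem_Icc] at hm
    rw [Ne, ZMod.natCast_eq_zero_iff]
    intro h; have := Nat.le_of_dvd (by omega) h; omega
  have key : ∀ m ∈ Icc 1 (p - 1),
      ∏ k ∈ (Icc 1 (p - 1)).erase m, (k : ZMod p)
        = (∏ k ∈ Icc 1 (p - 1), (k : ZMod p)) * ((m : ZMod p))⁻¹ := by
    intro m hm
    rw [eq_mul_inv_iff_mul_eq₀ (hne m hm)]
    exact Finset.prod_erase_mul _ _ hm
  rw [Finset.sum_congr rfl key, ← Finset.mul_sum, sum_inv_Icc p hp hp3, mul_zero]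

lemma split_prod (p q q' : ℕ) (hp : 2 ≤ p) (hq' : 1 ≤ q') (hq : q = p * q') (f : ℕ → ℕ) :
    ∏ m ∈ Icc 1 (q - 1), f m
      = (∏ m' ∈ Icc 1 (q' - 1), f (p * m'))
        * ∏ m ∈ (Icc 1 (q - 1)).filter (fun m => ¬ p ∣ m), f m := by
  rw [← Finset.prod_filter_mul_prod_filter_not (Icc 1 (q - 1)) (fun m => p ∣ m)]
  congr 1
  have himg : (Icc 1 (q' - 1)).image (fun m' => p * m')
      = (Icc 1 (q - 1)).filter (fun m => p ∣ m) := by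
    ext m
    simp only [Finset.mem_image, Finset.mem_filter, mem_Icc]
    constructor
    · rintro ⟨m', ⟨h1, h2⟩, rfl⟩
      have h3 : p * (q' - 1) + p = p * q' := by
        rw [← Nat.mul_succ]
        congr 1
        omega
      have h4 : p * m' ≤ p * (q' - 1) := Nat.mul_le_mul_left p h2
      have h5 : 1 * 1 ≤ p * m' := Nat.mul_le_mul (by omega) h1
      exact ⟨⟨by omega, by omega⟩, ⟨m', rfl⟩⟩
    · rintro ⟨⟨h1, h2⟩, k, rfl⟩
      refine ⟨k, ⟨?_, ?_⟩, rfl⟩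
      · by_contra h; push_neg at h; interval_cases k <;> omega
      · by_contra h; push_neg at h
        have : p * q' ≤ p * k := Nat.mul_le_mul_left p (by omega)
        omega
  rw [← himg, Finset.prod_image]
  intro a _ b _ h
  exact Nat.eq_of_mul_eq_mul_left (by omega) h

lemma main_lemma (p : ℕ) (hp : p.Prime) (hp3 : 3 ≤ p) (i : ℕ) :
    ∀ t : ℕ, (((i * p ^ t + p ^ t - 1).choose (p ^ t - 1) : ℕ) : ZMod (p ^ 2)) = 1 := by
  haveI : Fact p.Prime := ⟨hp⟩
  haveI : NeZero p := ⟨by omega⟩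
  haveI : NeZero (p ^ 2) := ⟨by positivity⟩
  intro t
  induction t with
  | zero => simp
  | succ t ih =>
    set q' : ℕ := p ^ t with hq'def
    set q : ℕ := p ^ (t + 1) with hqdef
    have hq'1 : 1 ≤ q' := Nat.one_le_pow _ _ (by omega)
    have hq1 : 1 ≤ q := Nat.one_le_pow _ _ (by omega)
    have hqq' : q = p * q' := by rw [hqdef, hq'def, pow_succ, mul_comm]
    set S : Finset ℕ := (Icc 1 (q - 1)).filter (fun m => ¬ p ∣ m) with hSdef
    set U : ℕ := ∏ m ∈ S, m with hUdef
    set Q : ℕ := ∏ m ∈ S, (i * q + m) with hQdef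
    set C : ℕ := (i * q + q - 1).choose (q - 1) with hCdef
    set C' : ℕ := (i * q' + q' - 1).choose (q' - 1) with hC'def
    set L : ℕ := q' - 1 with hLdef
    -- exact identity : C * U = C' * Q
    have card_Icc : (Icc 1 (q' - 1)).card = L := by
      rw [Nat.card_Icc]; omega
    have e1 : C * Nat.factorial (q - 1) = (p ^ L * (C' * Nat.factorial (q' - 1))) * Q := by
      rw [hCdef, keyA i q hq1, split_prod p q q' (by omega) hq'1 hqq' (fun m => i * q + m)]
      congr 1
      have : ∀ m' ∈ Icc 1 (q' - 1), i * q + p * m' = p * (i * q' + m') := by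
        intro m' _; rw [hqq']; ring
      rw [Finset.prod_congr rfl this, Finset.prod_mul_distrib, Finset.prod_const, card_Icc,
        hC'def, keyA i q' hq'1]
    have e2 : Nat.factorial (q - 1) = (p ^ L * Nat.factorial (q' - 1)) * U := by
      rw [← prod_Icc_id_fac, split_prod p q q' (by omega) hq'1 hqq' (fun m => m),
        Finset.prod_mul_distrib, Finset.prod_const, card_Icc, prod_Icc_id_fac]
    have hLfac : 0 < p ^ L * Nat.factorial (q' - 1) := by positivity
    have e3 : (p ^ L * Nat.factorial (q' - 1)) * (C * U)
        = (p ^ L * Nat.factorial (q' - 1)) * (C' * Q) := by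
      calc (p ^ L * Nat.factorial (q' - 1)) * (C * U)
          = C * ((p ^ L * Nat.factorial (q' - 1)) * U) := by ring
        _ = C * Nat.factorial (q - 1) := by rw [← e2]
        _ = (p ^ L * (C' * Nat.factorial (q' - 1))) * Q := e1
        _ = (p ^ L * Nat.factorial (q' - 1)) * (C' * Q) := by ring
    have e4 : C * U = C' * Q := Nat.eq_of_mul_eq_mul_left hLfac e3
    have hQU : ((Q : ℕ) : ZMod (p ^ 2)) = (U : ZMod (p ^ 2)) := by
      rw [hQdef, hUdef]
      push_cast
      rcases Nat.eq_zero_or_pos t with ht0 | ht1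
      · subst ht0
        have hq_p : q = p := by rw [hqdef]; norm_num
        have hSfull : S = Icc 1 (p - 1) := by
          rw [hSdef, hq_p]
          apply Finset.filter_true_of_mem
          intro m hm
          simp only [mem_Icc] at hm
          intro hdvd
          have := Nat.le_of_dvd (by omega) hdvd
          omega
        rw [hSfull, hq_p]
        have hp2 : ((p : ZMod (p ^ 2))) * ((p : ZMod (p ^ 2))) = 0 := by
          have h0 : ((p ^ 2 : ℕ) : ZMod (p ^ 2)) = 0 := ZMod.natCast_self _
          push_cast at h0
          linear_combination h0
        have hx : ((i : ZMod (p ^ 2)) * p) * ((i : ZMod (p ^ 2)) * p) = 0 := by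
          linear_combination ((i : ZMod (p ^ 2)) * (i : ZMod (p ^ 2))) * hp2
        have hexp := prod_add_nilsq ((i : ZMod (p ^ 2)) * p) hx (Icc 1 (p - 1))
          (fun m => (m : ZMod (p ^ 2)))
        have hre : ∀ m ∈ Icc 1 (p - 1),
            ((i : ZMod (p ^ 2)) * p + (m : ZMod (p ^ 2)))
              = ((m : ZMod (p ^ 2)) + (i : ZMod (p ^ 2)) * p) := fun m _ => by ring
        rw [Finset.prod_congr rfl hre, hexp]
        obtain ⟨N, hN⟩ := harmonic_dvd p hp hp3
        have hsum : (∑ m ∈ Icc 1 (p - 1), ∏ k ∈ (Icc 1 (p - 1)).erase m, (k : ZMod (p ^ 2)))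
            = ((p * N : ℕ) : ZMod (p ^ 2)) := by
          rw [← hN]; push_cast; rfl
        rw [hsum]
        have hz : ((i : ZMod (p ^ 2)) * p) * ((p * N : ℕ) : ZMod (p ^ 2)) = 0 := by
          push_cast
          linear_combination ((i : ZMod (p ^ 2)) * (N : ZMod (p ^ 2))) * hp2
        rw [hz, add_zero]
      · have hq0 : ((q : ℕ) : ZMod (p ^ 2)) = 0 := by
          rw [ZMod.natCast_eq_zero_iff, hqdef]
          exact pow_dvd_pow p (by omega)
        refine Finset.prod_congr rfl fun m _ => ?_
        rw [hq0, mul_zero, zero_add]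
    have hUunit : IsUnit ((U : ℕ) : ZMod (p ^ 2)) := by
      rw [ZMod.isUnit_iff_coprime]
      apply Nat.Coprime.pow_right
      rw [hUdef]
      apply Nat.Coprime.prod_left
      intro m hm
      have hmS : ¬ p ∣ m := (Finset.mem_filter.mp hm).2
      exact (Nat.coprime_comm.mp ((Nat.Prime.coprime_iff_not_dvd hp).mpr hmS))
    have e5 := congrArg (fun n : ℕ => ((n : ZMod (p ^ 2)))) e4
    simp only [Nat.cast_mul] at e5
    rw [ih, one_mul, hQU] at e5
    exact hUunit.mul_right_cancel (e5.trans (one_mul _).symm)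

/-- For a prime `p ≥ 3`, an integer `t ≥ 1` and every `i ≥ 0`,
the binomial coefficient `C(i·p^t + p^t - 1, p^t - 1)` is congruent to `1` modulo `p²`. -/
theorem choose_mod_prime_sq (p t : ℕ) (hp : p.Prime) (hp3 : 3 ≤ p) (ht : 1 ≤ t) (i : ℕ) :
    Nat.choose (i * p ^ t + p ^ t - 1) (p ^ t - 1) ≡ 1 [MOD p ^ 2] := by
  have h := main_lemma p hp hp3 i t
  exact (ZMod.natCast_eq_natCast_iff _ _ _).mp (by rw [h, Nat.cast_one])
end

section
/- Let t ≥ 2 be an integer. For every integer i ≥ 0, the binomial coefficient C(i·2^t + 2^t − 1, 2^t − 1) ≡ 2i+1 (mod 4). -/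
/-!
Since $(1+X)^{2^s} ≡ 1 + X^{2^s} \pmod 2$, squaring gives
$(1+X)^{2^{s+1}} ≡ 1 + 2X^{2^s} + X^{2^{s+1}} \pmod 4$. Comparing coefficients of $X^{2^t-1}$ in
$(1+X)^N (1+X)^{2^t}$ yields
$\binom{N+2^t}{2^t-1} ≡ \binom{N}{2^t-1} + 2\binom{N}{2^{t-1}-1} \pmod 4$, and by Lucas' theorem
the last coefficient is odd when $N ≡ -1 \pmod{2^t}$. So each step $i \to i+1$ adds $2$
modulo $4$.
-/

open Polynomial

namespace Polynomial

theorem exists_one_add_X_pow_two_pow_eq (s : ℕ) :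
    ∃ D : ℤ[X], (1 + X) ^ 2 ^ s = 1 + X ^ 2 ^ s + 2 * D := by
  induction s with
  | zero => exact ⟨0, by simp⟩
  | succ s ih =>
    obtain ⟨D, hD⟩ := ih
    refine ⟨X ^ 2 ^ s + 2 * D * (1 + X ^ 2 ^ s) + 2 * D ^ 2, ?_⟩
    rw [pow_succ, pow_mul, hD]
    ring

theorem exists_one_add_X_pow_two_pow_succ_eq (s : ℕ) :
    ∃ E : ℤ[X], (1 + X) ^ 2 ^ (s + 1) = 1 + 2 * X ^ 2 ^ s + X ^ 2 ^ (s + 1) + 4 * E := by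
  obtain ⟨D, hD⟩ := exists_one_add_X_pow_two_pow_eq s
  refine ⟨D * (1 + X ^ 2 ^ s) + D ^ 2, ?_⟩
  rw [pow_succ, pow_mul, pow_mul, hD]
  ring

end Polynomial

namespace Nat

theorem choose_add_two_pow_succ_modEq {s k : ℕ} (N : ℕ) (hk : 2 ^ s ≤ k)
    (hk' : k < 2 ^ (s + 1)) :
    (N + 2 ^ (s + 1)).choose k ≡ N.choose k + 2 * N.choose (k - 2 ^ s) [MOD 4] := by
  obtain ⟨E, hE⟩ := exists_one_add_X_pow_two_pow_succ_eq s
  have hcoeff := congrArg (coeff · k) (congrArg ((1 + X) ^ N * ·) hE)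
  simp only [← pow_add] at hcoeff
  rw [show (1 + X : ℤ[X]) ^ N * (1 + 2 * X ^ 2 ^ s + X ^ 2 ^ (s + 1) + 4 * E) =
      (1 + X) ^ N + 2 * ((1 + X) ^ N * X ^ 2 ^ s) + (1 + X) ^ N * X ^ 2 ^ (s + 1)
        + 4 * ((1 + X) ^ N * E) by ring] at hcoeff
  simp only [coeff_add, coeff_ofNat_mul, coeff_mul_X_pow', coeff_one_add_X_pow, if_pos hk,
    if_neg (not_le.mpr hk'), add_zero] at hcoeff
  rw [← Int.natCast_modEq_iff]
  push_cast
  rw [hcoeff]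
  exact Int.modEq_iff_dvd.mpr ⟨-((1 + X) ^ N * E).coeff k, by ring⟩

theorem odd_choose_of_lt_two_pow (a : ℕ) {t j : ℕ} (hj : j < 2 ^ t) :
    Odd ((a * 2 ^ t + (2 ^ t - 1)).choose j) := by
  induction t generalizing j with
  | zero => simp_all
  | succ t ih =>
    have hP : 1 ≤ 2 ^ t := Nat.one_le_two_pow
    have hn : a * 2 ^ (t + 1) + (2 ^ (t + 1) - 1) = 2 * (a * 2 ^ t + (2 ^ t - 1)) + 1 := by
      rw [pow_succ]; grind
    have hlucas := Choose.choose_modEq_choose_mod_mul_choose_div_nat (p := 2)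
      (n := a * 2 ^ (t + 1) + (2 ^ (t + 1) - 1)) (k := j)
    simp only [hn, mul_add_mod_self_left, mul_add_div two_pos, Nat.reduceDiv, add_zero] at hlucas
    have hlow : choose 1 (j % 2) = 1 := by rcases mod_two_eq_zero_or_one j with h | h <;> simp [h]
    rw [hlow, one_mul] at hlucas
    rw [hn, odd_iff, hlucas, ← odd_iff]
    exact ih (by rw [pow_succ] at hj; omega)

end Nat

/-- For an integer `t ≥ 2` and every `i ≥ 0`, the binomial coefficient
`C(i·2^t + 2^t - 1, 2^t - 1)` is congruent to `2i+1` modulo `4`. -/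
theorem choose_mod_four (t : ℕ) (ht : 2 ≤ t) (i : ℕ) :
    Nat.choose (i * 2 ^ t + 2 ^ t - 1) (2 ^ t - 1) ≡ 2 * i + 1 [MOD 4] := by
  obtain ⟨s, rfl⟩ : ∃ s, t = s + 1 := ⟨t - 1, by omega⟩
  have hpow : 2 ^ (s + 1) = 2 * 2 ^ s := pow_succ' 2 s
  have hpos : 1 ≤ 2 ^ s := Nat.one_le_two_pow
  induction i with
  | zero => simp [Nat.ModEq.refl]
  | succ i ih =>
    obtain ⟨c, hc⟩ :=
      Nat.odd_choose_of_lt_two_pow i (t := s + 1) (j := 2 ^ (s + 1) - 1 - 2 ^ s) (by omega)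
    set N := i * 2 ^ (s + 1) + (2 ^ (s + 1) - 1)
    have hN : (i + 1) * 2 ^ (s + 1) + 2 ^ (s + 1) - 1 = N + 2 ^ (s + 1) := by grind
    rw [show i * 2 ^ (s + 1) + 2 ^ (s + 1) - 1 = N by omega] at ih
    rw [hN]
    refine (Nat.choose_add_two_pow_succ_modEq N (by omega) (by omega)).trans ?_
    rw [hc]
    unfold Nat.ModEq at ih ⊢
    omega
end

section
/- Let p be a prime number and write k = b·p^m with m ≥ 1, b ≥ 2 and p ∤ b. Then the integer (k²)!/(k!)^{k+1} is divisible by p^m. -/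
/-!
The quotient `(k²)! / (k!)^{k+1}` is `Nat.uniformBell k k`. Legendre's formula
`(p - 1) v_p(n!) = n - s_p(n)` turns its valuation into digit sums:
`(p - 1) v_p = (k + 1) s_p(k) - k - s_p(k²)`. For `k = b p^m` the digit sums only see `b`:
`s_p(k) = s_p(b) ≥ 2` because `p ∤ b`, and `s_p(k²) = s_p(b²) ≤ b s_p(b)` by subadditivity.
This makes `(p - 1) v_p ≥ p^m`, which beats `(p - 1) m` by Bernoulli's inequality.
-/

open Nat

theorem sub_one_mul_padicValNat_factorial_add_sum_digits {p : ℕ} [Fact p.Prime] (n : ℕ) :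
    (p - 1) * padicValNat p n ! + (p.digits n).sum = n := by
  rw [sub_one_mul_padicValNat_factorial, Nat.sub_add_cancel (digit_sum_le p n)]

namespace Nat

theorem sum_digits_pos {b n : ℕ} (hn : n ≠ 0) : 0 < (b.digits n).sum :=
  List.sum_pos_iff_exists_pos_nat.mpr
    ⟨_, List.getLast_mem (digits_ne_nil_iff_ne_zero.mpr hn),
      pos_of_ne_zero (getLast_digit_ne_zero b hn)⟩

theorem two_le_sum_digits {b n : ℕ} (hb : 1 < b) (hn : 2 ≤ n) (hbn : ¬ b ∣ n) :
    2 ≤ (b.digits n).sum := by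
  have hmod : 0 < n % b := pos_of_ne_zero fun h => hbn (dvd_of_mod_eq_zero h)
  rw [digits_def' hb (by omega), List.sum_cons]
  rcases lt_or_ge n b with hlt | hge
  · rw [mod_eq_of_lt hlt]
    omega
  · have := sum_digits_pos (b := b) (div_pos hge (by omega)).ne'
    omega

theorem sum_digits_mul_base_pow {b : ℕ} (hb : 1 < b) (n k : ℕ) :
    (b.digits (n * b ^ k)).sum = (b.digits n).sum := by
  rcases eq_zero_or_pos n with rfl | hn
  · simp
  · rw [mul_comm, digits_base_pow_mul hb hn, List.sum_append, List.sum_replicate, smul_zero,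
      zero_add]

theorem sum_digits_add_le (p : ℕ) [Fact p.Prime] (x y : ℕ) :
    (p.digits (x + y)).sum ≤ (p.digits x).sum + (p.digits y).sum := by
  have hval : padicValNat p x ! + padicValNat p y ! ≤ padicValNat p (x + y)! := by
    rw [← padicValNat_dvd_iff_le (factorial_ne_zero _), pow_add]
    exact (mul_dvd_mul pow_padicValNat_dvd pow_padicValNat_dvd).trans
      (factorial_mul_factorial_dvd_factorial_add x y)
  have hmul := Nat.mul_le_mul_left (p - 1) hval
  have hx := sub_one_mul_padicValNat_factorial_add_sum_digits (p := p) x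
  have hy := sub_one_mul_padicValNat_factorial_add_sum_digits (p := p) y
  have hxy := sub_one_mul_padicValNat_factorial_add_sum_digits (p := p) (x + y)
  rw [Nat.mul_add] at hmul
  omega

theorem sum_digits_mul_le (p : ℕ) [Fact p.Prime] (a n : ℕ) :
    (p.digits (a * n)).sum ≤ a * (p.digits n).sum := by
  induction a with
  | zero => simp
  | succ a ih =>
    rw [succ_mul, succ_mul]
    exact (sum_digits_add_le p _ _).trans (by omega)

theorem sub_one_mul_padicValNat_uniformBell_add_sum_digits (p : ℕ) [Fact p.Prime] (m : ℕ)
    {n : ℕ} (hn : n ≠ 0) :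
    (p - 1) * padicValNat p (uniformBell m n) + (p.digits (m * n)).sum + m =
      m * (p.digits n).sum + (p.digits m).sum := by
  have hval : padicValNat p (m * n)! =
      padicValNat p (uniformBell m n) + m * padicValNat p n ! + padicValNat p m ! := by
    have hU : uniformBell m n ≠ 0 := by
      intro h
      exact factorial_ne_zero (m * n) (by rw [← uniformBell_mul_eq m hn, h, zero_mul, zero_mul])
    rw [← uniformBell_mul_eq m hn, padicValNat.mul (by positivity) (factorial_ne_zero m),
      padicValNat.mul hU (by positivity), padicValNat.pow]
  have hmn := sub_one_mul_padicValNat_factorial_add_sum_digits (p := p) (m * n)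
  have hn' := sub_one_mul_padicValNat_factorial_add_sum_digits (p := p) n
  have hm := sub_one_mul_padicValNat_factorial_add_sum_digits (p := p) m
  rw [hval] at hmn
  zify at hmn hn' hm ⊢
  linear_combination hmn - m * hn' - hm

theorem uniformBell_ne_zero (m n : ℕ) : uniformBell m n ≠ 0 := by
  rw [uniformBell_eq]
  exact Finset.prod_ne_zero_iff.mpr fun i _ => (choose_pos (by omega)).ne'

theorem mul_add_mul_add_le_mul_mul_add {b s P : ℕ} (hb : 2 ≤ b) (hs : 2 ≤ s) (hP : 2 ≤ P) :
    b * s + b * P + P ≤ b * P * s + s := by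
  -- the difference is `(s - 2) (b (P - 1) + 1) + (b - 1) (P - 2)`
  have h₁ : 0 ≤ ((s : ℤ) - 2) * (b * (P - 1) + 1) := by
    apply mul_nonneg <;> [linarith; nlinarith]
  have h₂ : 0 ≤ ((b : ℤ) - 1) * (P - 2) := by apply mul_nonneg <;> linarith
  zify
  linarith

theorem pow_dvd_uniformBell_self {p b m : ℕ} [hp : Fact p.Prime] (hm : 1 ≤ m) (hb : 2 ≤ b)
    (hpb : ¬ p ∣ b) : p ^ m ∣ uniformBell (b * p ^ m) (b * p ^ m) := by
  have hp1 := hp.out.one_lt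
  set k := b * p ^ m
  set s := (p.digits b).sum
  have hs : 2 ≤ s := two_le_sum_digits hp1 hb hpb
  have hsk : (p.digits k).sum = s := sum_digits_mul_base_pow hp1 b m
  have hskk : (p.digits (k * k)).sum ≤ b * s := by
    rw [show k * k = (b * b) * p ^ (m + m) by ring, sum_digits_mul_base_pow hp1]
    exact sum_digits_mul_le p b b
  have hval := sub_one_mul_padicValNat_uniformBell_add_sum_digits p k (by positivity : k ≠ 0)
  have hbernoulli : 1 + m * (p - 1) ≤ p ^ m := by
    simpa [Nat.add_sub_cancel' hp1.le] using
      one_add_le_pow_of_two_add_nonneg (zero_le (2 + (p - 1))) m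
  have hpm : 2 ≤ p ^ m := hp1.trans_le (le_self_pow₀ hp1.le (by omega))
  have hkey : b * s + k + p ^ m ≤ k * s + s := mul_add_mul_add_le_mul_mul_add hb hs hpm
  rw [padicValNat_dvd_iff_le (uniformBell_ne_zero k k)]
  refine Nat.le_of_mul_le_mul_left ?_ (Nat.sub_pos_of_lt hp1)
  rw [hsk] at hval
  linarith

end Nat

/-- Let `p` be a prime and `k = b · p^m` with `m ≥ 1`, `b ≥ 2` and `p ∤ b`.  Then the
integer `(k²)! / (k!)^{k+1}` is divisible by `p^m`; equivalently,
`p^m · (k!)^{k+1}` divides `(k²)!`. -/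
theorem central_quotient_divisibility (p b m k : ℕ) (hp : p.Prime)
    (hm : 1 ≤ m) (hb : 2 ≤ b) (hpb : ¬ p ∣ b) (hk : k = b * p ^ m) :
    p ^ m * Nat.factorial k ^ (k + 1) ∣ Nat.factorial (k * k) := by
  have : Fact p.Prime := ⟨hp⟩
  have hk0 : k ≠ 0 := hk ▸ mul_ne_zero (by omega) (pow_ne_zero m hp.ne_zero)
  have hfac : (k * k)! = uniformBell k k * k ! ^ (k + 1) := by
    rw [← uniformBell_mul_eq k hk0, pow_succ, mul_assoc]
  rw [hfac, hk]
  exact mul_dvd_mul_right (pow_dvd_uniformBell_self hm hb hpb) _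
end
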